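/- arXiv:2310.11037 — 3 statements merged into one kernel-verified Lean document; each statement's English description precedes it below -/
import Mathlib

section
/- Let ι be a nonempty index set and f, g : ι → ℝ with constants 0 < c₁ ≤ c₂ and m ∈ ℝ such that c₁ ≤ g(i) ≤ c₂ and f(i) ≥ m for all i ∈ ι. Define θ = sInf { f(i) / g(i) : i ∈ ι } and, for β ∈ ℝ, h(β) = sInf { f(i) − β·g(i) : i ∈ ι }. Then for every β ∈ ℝ: h(β) < 0 if and only if θ < β; h(β) = 0 if and only if θ = β; and h(β) > 0 if and only if θ > β. -/
/-- Dinkelbach's fractional-programming equivalence: for a family `f i / g i`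
with `0 < c₁ ≤ g i ≤ c₂` and `f i ≥ m`, the sign of the linearized infimum
`h β = inf_i (f i - β * g i)` determines the position of `β` relative to
`θ = inf_i (f i / g i)`. -/
theorem dinkelbach_sign_equivalence {ι : Type*} [Nonempty ι] (f g : ι → ℝ)
    (c₁ c₂ m : ℝ) (hc₁ : 0 < c₁) (hc₁₂ : c₁ ≤ c₂)
    (hg : ∀ i, c₁ ≤ g i ∧ g i ≤ c₂) (hf : ∀ i, m ≤ f i) :
    ∀ β : ℝ,
      (sInf (Set.range fun i => f i - β * g i) < 0 ↔
        sInf (Set.range fun i => f i / g i) < β) ∧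
      (sInf (Set.range fun i => f i - β * g i) = 0 ↔
        sInf (Set.range fun i => f i / g i) = β) ∧
      (0 < sInf (Set.range fun i => f i - β * g i) ↔
        β < sInf (Set.range fun i => f i / g i)) := by
  intro β
  have hgpos : ∀ i, 0 < g i := fun i => lt_of_lt_of_le hc₁ (hg i).1
  have hc₂ : 0 < c₂ := lt_of_lt_of_le hc₁ hc₁₂
  have hbddh : BddBelow (Set.range fun i => f i - β * g i) := by
    refine ⟨m - |β| * c₂, ?_⟩
    rintro x ⟨i, rfl⟩
    have h1 : β * g i ≤ |β| * c₂ := by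
      calc β * g i ≤ |β| * g i :=
            mul_le_mul_of_nonneg_right (le_abs_self β) (hgpos i).le
        _ ≤ |β| * c₂ := mul_le_mul_of_nonneg_left (hg i).2 (abs_nonneg β)
    have := hf i
    simp only
    linarith
  have hbddr : BddBelow (Set.range fun i => f i / g i) := by
    refine ⟨-|m| / c₁, ?_⟩
    rintro x ⟨i, rfl⟩
    have h1 : -|m| ≤ f i := le_trans (neg_abs_le m) (hf i)
    calc -|m| / c₁ ≤ -|m| / g i := by
          rw [div_le_div_iff₀ hc₁ (hgpos i)]
          nlinarith [abs_nonneg m, (hg i).1]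
      _ ≤ f i / g i := by
          rw [div_le_div_iff₀ (hgpos i) (hgpos i)]
          nlinarith [mul_le_mul_of_nonneg_right h1 (hgpos i).le]
  set θ := sInf (Set.range fun i => f i / g i) with hθ
  set h := sInf (Set.range fun i => f i - β * g i) with hh
  have hne1 : (Set.range fun i => f i - β * g i).Nonempty := Set.range_nonempty _
  have hne2 : (Set.range fun i => f i / g i).Nonempty := Set.range_nonempty _
  have e1 : h < 0 ↔ θ < β := by
    rw [hh, csInf_lt_iff hbddh hne1, hθ, csInf_lt_iff hbddr hne2]
    constructor
    · rintro ⟨x, ⟨i, rfl⟩, hx⟩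
      simp only at hx
      exact ⟨f i / g i, ⟨i, rfl⟩, by rw [div_lt_iff₀ (hgpos i)]; linarith⟩
    · rintro ⟨x, ⟨i, rfl⟩, hx⟩
      simp only at hx
      rw [div_lt_iff₀ (hgpos i)] at hx
      exact ⟨f i - β * g i, ⟨i, rfl⟩, by linarith⟩
  have e3 : 0 < h ↔ β < θ := by
    constructor
    · intro h0
      have key : β + h / c₂ ≤ θ := by
        rw [hθ]
        apply le_csInf hne2
        rintro x ⟨i, rfl⟩
        have h1 : h ≤ f i - β * g i := csInf_le hbddh ⟨i, rfl⟩
        show β + h / c₂ ≤ f i / g i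
        have h2 : h / c₂ ≤ h / g i :=
          div_le_div_of_nonneg_left h0.le (hgpos i) (hg i).2
        have h3 : β + h / g i ≤ f i / g i := by
          rw [show β + h / g i = (β * g i + h) / g i by
            rw [eq_div_iff (hgpos i).ne']; ring_nf; rw [mul_inv_cancel_right₀ (hgpos i).ne']]
          rw [div_le_div_iff₀ (hgpos i) (hgpos i)]
          nlinarith [mul_le_mul_of_nonneg_right h1 (hgpos i).le]
        linarith
      have : 0 < h / c₂ := div_pos h0 hc₂
      linarith
    · intro hβθ
      have key : c₁ * (θ - β) ≤ h := by
        rw [hh]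
        apply le_csInf hne1
        rintro x ⟨i, rfl⟩
        have h1 : θ ≤ f i / g i := csInf_le hbddr ⟨i, rfl⟩
        have h2 : θ * g i ≤ f i := (le_div_iff₀ (hgpos i)).mp h1
        show c₁ * (θ - β) ≤ f i - β * g i
        nlinarith [(hg i).1, mul_le_mul_of_nonneg_left (hg i).1
          (by linarith : (0:ℝ) ≤ θ - β)]
      nlinarith
  refine ⟨e1, ?_, e3⟩
  constructor
  · intro h0
    have a1 : ¬ θ < β := fun hc => by have := e1.mpr hc; linarith
    have a2 : ¬ β < θ := fun hc => by have := e3.mpr hc; linarith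
    exact le_antisymm (not_lt.mp a2) (not_lt.mp a1)
  · intro h0
    have a1 : ¬ h < 0 := fun hc => by have := e1.mp hc; linarith [h0.le]
    have a2 : ¬ 0 < h := fun hc => by have := e3.mp hc; linarith [h0.ge]
    linarith
end

section
/- Let v > 0 and let f : ℝ → ℝ be three times differentiable on [0, v] with f‴(w) ≥ 0 for all w ∈ [0, v], f′(0) = 0, f′(v) = 0, and f(v) = 0. Then f(w) ≥ 0 for all w ∈ [0, v]. -/
/-!
Since `f‴ ≥ 0`, the derivative `f′` is convex on `[0, v]`; vanishing at both endpoints, it is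
nonpositive in between. Hence `f` is antitone on `[0, v]`, and `f w ≥ f v = 0`.
-/

open Set

section
variable {D : Set ℝ} {f f' f'' : ℝ → ℝ}

theorem hasDerivWithinAt_interior_of_forall (hf : ∀ x ∈ D, HasDerivWithinAt f (f' x) D x) :
    ∀ x ∈ interior D, HasDerivWithinAt f (f' x) (interior D) x :=
  fun x hx => (hf x (interior_subset hx)).mono interior_subset

theorem convexOn_of_forall_hasDerivWithinAt2_nonneg (hD : Convex ℝ D)
    (hf : ∀ x ∈ D, HasDerivWithinAt f (f' x) D x) (hf' : ∀ x ∈ D, HasDerivWithinAt f' (f'' x) D x)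
    (hf'' : ∀ x ∈ D, 0 ≤ f'' x) : ConvexOn ℝ D f :=
  convexOn_of_hasDerivWithinAt2_nonneg hD (fun x hx => (hf x hx).continuousWithinAt)
    (hasDerivWithinAt_interior_of_forall hf) (hasDerivWithinAt_interior_of_forall hf')
    fun x hx => hf'' x (interior_subset hx)

theorem antitoneOn_of_forall_hasDerivWithinAt_nonpos (hD : Convex ℝ D)
    (hf : ∀ x ∈ D, HasDerivWithinAt f (f' x) D x) (hf' : ∀ x ∈ D, f' x ≤ 0) : AntitoneOn f D :=
  antitoneOn_of_hasDerivWithinAt_nonpos hD (fun x hx => (hf x hx).continuousWithinAt)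
    (hasDerivWithinAt_interior_of_forall hf) fun x hx => hf' x (interior_subset hx)

end

theorem ConvexOn.nonpos_of_left_right_eq_zero {a b : ℝ} {g : ℝ → ℝ} (hg : ConvexOn ℝ (Icc a b) g)
    (ha : g a = 0) (hb : g b = 0) : ∀ x ∈ Icc a b, g x ≤ 0 := fun x hx => by
  have hab : a ≤ b := hx.1.trans hx.2
  simpa [ha, hb] using hg.le_max_of_mem_Icc (left_mem_Icc.2 hab) (right_mem_Icc.2 hab) hx

theorem nonneg_of_third_deriv_nonneg_general (v : ℝ)
    (f f' f'' f''' : ℝ → ℝ)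
    (hd1 : ∀ w ∈ Set.Icc (0:ℝ) v, HasDerivWithinAt f (f' w) (Set.Icc 0 v) w)
    (hd2 : ∀ w ∈ Set.Icc (0:ℝ) v, HasDerivWithinAt f' (f'' w) (Set.Icc 0 v) w)
    (hd3 : ∀ w ∈ Set.Icc (0:ℝ) v, HasDerivWithinAt f'' (f''' w) (Set.Icc 0 v) w)
    (h3 : ∀ w ∈ Set.Icc (0:ℝ) v, 0 ≤ f''' w)
    (h10 : f' 0 = 0) (h1v : f' v = 0) (hfv : f v = 0) :
    ∀ w ∈ Set.Icc (0:ℝ) v, 0 ≤ f w := by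
  have hf'_convex : ConvexOn ℝ (Icc 0 v) f' :=
    convexOn_of_forall_hasDerivWithinAt2_nonneg (convex_Icc 0 v) hd2 hd3 h3
  have hf_anti : AntitoneOn f (Icc 0 v) :=
    antitoneOn_of_forall_hasDerivWithinAt_nonpos (convex_Icc 0 v) hd1
      (hf'_convex.nonpos_of_left_right_eq_zero h10 h1v)
  intro w hw
  simpa [hfv] using hf_anti hw (right_mem_Icc.2 (hw.1.trans hw.2)) hw.2

/-- If `f` is three times differentiable on `[0, v]` with `f‴ ≥ 0` there,
`f′(0) = f′(v) = 0` and `f(v) = 0`, then `f ≥ 0` on `[0, v]`. -/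
theorem nonneg_of_third_deriv_nonneg (v : ℝ) (hv : 0 < v)
    (f f' f'' f''' : ℝ → ℝ)
    (hd1 : ∀ w ∈ Set.Icc (0:ℝ) v, HasDerivWithinAt f (f' w) (Set.Icc 0 v) w)
    (hd2 : ∀ w ∈ Set.Icc (0:ℝ) v, HasDerivWithinAt f' (f'' w) (Set.Icc 0 v) w)
    (hd3 : ∀ w ∈ Set.Icc (0:ℝ) v, HasDerivWithinAt f'' (f''' w) (Set.Icc 0 v) w)
    (h3 : ∀ w ∈ Set.Icc (0:ℝ) v, 0 ≤ f''' w)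
    (h10 : f' 0 = 0) (h1v : f' v = 0) (hfv : f v = 0) :
    ∀ w ∈ Set.Icc (0:ℝ) v, 0 ≤ f w :=
  nonneg_of_third_deriv_nonneg_general v f f' f'' f''' hd1 hd2 hd3 h3 h10 h1v hfv
end

section
/- Let b > 0 and define u : ℝ → ℝ by u(x) = max(b, x²). Then for all x, y ∈ ℝ, u(x + y) ≤ u(x) · (1 + 2|y|/√b + y²/b). -/
/-- The weight function `u(x) = max(b, x²)` (for `b > 0`) satisfies
`u(x + y) ≤ u(x) · (1 + 2|y|/√b + y²/b)`. -/
theorem weight_function_bound (b : ℝ) (hb : 0 < b) :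
    ∀ x y : ℝ,
      max b ((x + y) ^ 2) ≤ max b (x ^ 2) * (1 + 2 * |y| / Real.sqrt b + y ^ 2 / b) := by
  intro x y
  set M := max b (x ^ 2) with hM
  have hbM : b ≤ M := le_max_left _ _
  have hxM : x ^ 2 ≤ M := le_max_right _ _
  have hM0 : 0 < M := lt_of_lt_of_le hb hbM
  have hsb : 0 < Real.sqrt b := Real.sqrt_pos.mpr hb
  have hF : 1 ≤ 1 + 2 * |y| / Real.sqrt b + y ^ 2 / b := by
    have h1 : 0 ≤ 2 * |y| / Real.sqrt b := by positivity
    have h2 : 0 ≤ y ^ 2 / b := by positivity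
    linarith
  rw [max_le_iff]
  constructor
  · calc b ≤ M := hbM
      _ = M * 1 := (mul_one M).symm
      _ ≤ M * (1 + 2 * |y| / Real.sqrt b + y ^ 2 / b) := by
          exact mul_le_mul_of_nonneg_left hF hM0.le
  · have hxabs : |x| ≤ Real.sqrt M := by
      rw [← Real.sqrt_sq_eq_abs]
      exact Real.sqrt_le_sqrt hxM
    have hsM : Real.sqrt M * Real.sqrt b ≤ M := by
      calc Real.sqrt M * Real.sqrt b = Real.sqrt (M * b) := (Real.sqrt_mul hM0.le b).symm
        _ ≤ Real.sqrt (M * M) := Real.sqrt_le_sqrt (by nlinarith)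
        _ = M := by rw [← pow_two, Real.sqrt_sq hM0.le]
    have hsMle : Real.sqrt M ≤ M / Real.sqrt b := by
      rw [le_div_iff₀ hsb]; exact hsM
    have key : (x + y) ^ 2 ≤ x ^ 2 + 2 * |x| * |y| + y ^ 2 := by
      have := abs_mul x y
      nlinarith [abs_nonneg x, abs_nonneg y, sq_abs x, sq_abs y, abs_mul_abs_self x,
        neg_abs_le (x * y), le_abs_self (x * y)]
    have h2 : 2 * |x| * |y| ≤ M * (2 * |y| / Real.sqrt b) := by
      have : 2 * |x| * |y| ≤ 2 * Real.sqrt M * |y| := by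
        nlinarith [abs_nonneg y]
      calc 2 * |x| * |y| ≤ 2 * Real.sqrt M * |y| := this
        _ ≤ 2 * (M / Real.sqrt b) * |y| := by nlinarith [abs_nonneg y]
        _ = M * (2 * |y| / Real.sqrt b) := by ring
    have h3 : y ^ 2 ≤ M * (y ^ 2 / b) := by
      rw [mul_div_assoc']
      rw [le_div_iff₀ hb]
      nlinarith [sq_nonneg y]
    calc (x + y) ^ 2 ≤ x ^ 2 + 2 * |x| * |y| + y ^ 2 := key
      _ ≤ M + M * (2 * |y| / Real.sqrt b) + M * (y ^ 2 / b) := by linarith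
      _ = M * (1 + 2 * |y| / Real.sqrt b + y ^ 2 / b) := by ring
end
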